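/- arXiv:2411.09095 — 2 statements merged into one kernel-verified Lean document; each statement's English description precedes it below -/
import Mathlib

section
/- Let (G,c) be an edge-colored graph on n vertices that is edge-minimal subject to δ^c(G) ≥ n/2. Then G contains no monochromatic cycle and no monochromatic path with three edges; equivalently, for every color α, every connected component of F_α is a star (that is, F_α is a star forest). -/
open SimpleGraph

/-- Number of distinct colors on edges incident to `v`. -/
noncomputable def colorDegree {V C : Type*} (G : SimpleGraph V) (c : Sym2 V → C) (v : V) : ℕ :=
  (c '' (G.incidenceSet v)).ncard

/-- The minimum color degree of `(G, c)` is at least `r`. -/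
def MinColorDegreeGe {V C : Type*} (G : SimpleGraph V) (c : Sym2 V → C) (r : ℝ) : Prop :=
  ∀ v : V, r ≤ (colorDegree G c v : ℝ)

/-- `(G, c)` is edge-minimal subject to `δ^c(G) ≥ n/2` where `n` is the number of vertices. -/
def EdgeMinimal {V C : Type*} [Fintype V] (G : SimpleGraph V) (c : Sym2 V → C) : Prop :=
  MinColorDegreeGe G c ((Fintype.card V : ℝ) / 2) ∧
  ∀ e ∈ G.edgeSet, ¬ MinColorDegreeGe (G.deleteEdges {e}) c ((Fintype.card V : ℝ) / 2)

/-- `d_{F_α}(v)`: the number of edges of color `α` incident to `v`. -/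
noncomputable def monoDeg {V C : Type*} (G : SimpleGraph V) (c : Sym2 V → C) (α : C) (v : V) : ℕ :=
  {w : V | G.Adj v w ∧ c s(v, w) = α}.ncard

/-- `D` is a `D_G`-digraph for `(G, c)`: for every color `α` and vertex `v` with
`1 ≤ d_{F_α}(v) ≤ √n`, exactly one arc `v → w` along an edge of color `α`, and no other arcs. -/
def IsDGDigraph {V C : Type*} [Fintype V] (G : SimpleGraph V) (c : Sym2 V → C)
    (D : V → V → Prop) : Prop :=
  (∀ v w, D v w → G.Adj v w) ∧
  (∀ v w w', D v w → D v w' → c s(v, w) = c s(v, w') → w = w') ∧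
  (∀ v w, D v w → (monoDeg G c (c s(v, w)) v : ℝ) ≤ Real.sqrt (Fintype.card V)) ∧
  (∀ v (α : C), 1 ≤ monoDeg G c α v → (monoDeg G c α v : ℝ) ≤ Real.sqrt (Fintype.card V) →
      ∃ w, D v w ∧ c s(v, w) = α)

/-- The bidirected graph `G*` of a digraph `D`: `{u,v}` is an edge iff both `uv` and `vu` are arcs. -/
def Gstar {V : Type*} (D : V → V → Prop) : SimpleGraph V where
  Adj u v := u ≠ v ∧ D u v ∧ D v u
  symm := ⟨fun u v h => ⟨h.1.symm, h.2.2, h.2.1⟩⟩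
  loopless := ⟨fun v h => h.1 rfl⟩

/-- A rainbow path: a path whose edges receive pairwise distinct colors. -/
def IsRainbowPath {V C : Type*} {G : SimpleGraph V} {u v : V} (c : Sym2 V → C)
    (p : G.Walk u v) : Prop :=
  p.IsPath ∧ (p.edges.map c).Nodup

/-- The number of arcs of `D` from `X` to `Y`. -/
noncomputable def arcsBetween {V : Type*} (D : V → V → Prop) (X Y : Set V) : ℕ :=
  {p : V × V | p.1 ∈ X ∧ p.2 ∈ Y ∧ D p.1 p.2}.ncard

/-- `β`-extremal of type 1 with respect to the digraph `D`. -/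
def ExtremalType1 {V : Type*} (β : ℝ) (n : ℕ) (D : V → V → Prop) : Prop :=
  ∃ V1 V2 : Set V, V1 ∪ V2 = Set.univ ∧ Disjoint V1 V2 ∧
    (1 / 2 - β) * n ≤ (V1.ncard : ℝ) ∧ (1 / 2 - β) * n ≤ (V2.ncard : ℝ) ∧
    ((arcsBetween D V1 V2 + arcsBetween D V2 V1 : ℕ) : ℝ) ≤ β * n ^ 2

/-- `β`-extremal of type 2 with respect to the digraph `D`. -/
def ExtremalType2 {V : Type*} (β : ℝ) (n : ℕ) (D : V → V → Prop) : Prop :=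
  ((Gstar D).edgeSet.ncard : ℝ) ≤ β * n ^ 2

/-- `(G, c)` is rainbow `k`-connected. -/
def RainbowKConnected {V C : Type*} (G : SimpleGraph V) (c : Sym2 V → C) (k : ℕ) : Prop :=
  ∀ u v : V, u ≠ v → ∃ p : Fin k → G.Walk u v,
    (∀ i, (p i).IsPath) ∧
    (∀ i j, i ≠ j → p i ≠ p j) ∧
    (∀ i j, i ≠ j → ∀ w, w ∈ (p i).support → w ∈ (p j).support → w = u ∨ w = v) ∧
    Set.InjOn c {e : Sym2 V | ∃ i, e ∈ (p i).edges}

/-- `F_α`: the spanning subgraph of `G` consisting of the edges of color `α`. -/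
def monoSubgraph {V C : Type*} (G : SimpleGraph V) (c : Sym2 V → C) (α : C) : SimpleGraph V where
  Adj u v := G.Adj u v ∧ c s(u, v) = α
  symm := by
    constructor
    intro u v h
    refine ⟨h.1.symm, ?_⟩
    rw [Sym2.eq_swap]
    exact h.2
  loopless := ⟨fun v h => G.loopless.irrefl v h.1⟩

/-- Density of the (ordered) pair `(A, B)` for the relation (digraph) `D`. -/
noncomputable def ddensity {V : Type*} (D : V → V → Prop) (A B : Set V) : ℝ :=
  (arcsBetween D A B : ℝ) / ((A.ncard : ℝ) * (B.ncard : ℝ))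

/-- The pair `(A, B)` is `ε`-regular of density `d` for the relation (digraph) `D`. -/
def RegularPairRel {V : Type*} (D : V → V → Prop) (A B : Set V) (ε d : ℝ) : Prop :=
  ∀ A' ⊆ A, ∀ B' ⊆ B, ε * A.ncard ≤ (A'.ncard : ℝ) → ε * B.ncard ≤ (B'.ncard : ℝ) →
    |ddensity D A' B' - d| ≤ ε

lemma key_middle_edge {V C : Type} [Fintype V] (G : SimpleGraph V) (c : Sym2 V → C)
    (hmin : EdgeMinimal G c) {a b x y : V} (hab : G.Adj a b)
    (hx : G.Adj a x) (hcx : c s(a, x) = c s(a, b)) (hxb : x ≠ b)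
    (hy : G.Adj b y) (hcy : c s(b, y) = c s(a, b)) (hya : y ≠ a) : False := by
  apply hmin.2 s(a, b) (G.mem_edgeSet.mpr hab)
  intro w
  have hset : c '' ((G.deleteEdges {s(a, b)}).incidenceSet w) = c '' (G.incidenceSet w) := by
    apply Set.Subset.antisymm
    · apply Set.image_mono
      intro f hf
      have h1 : f ∈ (G.deleteEdges {s(a, b)}).edgeSet := hf.1
      rw [SimpleGraph.edgeSet_deleteEdges] at h1
      exact ⟨h1.1, hf.2⟩
    · rintro β ⟨f, ⟨hfE, hwf⟩, rfl⟩
      by_cases hfe : f = s(a, b)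
      · subst hfe
        rcases Sym2.mem_iff.mp hwf with rfl | rfl
        · refine ⟨s(w, x), ⟨?_, Sym2.mem_mk_left w x⟩, hcx⟩
          rw [SimpleGraph.edgeSet_deleteEdges]
          refine ⟨G.mem_edgeSet.mpr hx, ?_⟩
          simp only [Set.mem_singleton_iff, Sym2.eq_iff]
          rintro (⟨-, rfl⟩ | ⟨rfl, rfl⟩)
          · exact hxb rfl
          · exact hab.ne rfl
        · refine ⟨s(w, y), ⟨?_, Sym2.mem_mk_left w y⟩, hcy⟩
          rw [SimpleGraph.edgeSet_deleteEdges]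
          refine ⟨G.mem_edgeSet.mpr hy, ?_⟩
          simp only [Set.mem_singleton_iff, Sym2.eq_iff]
          rintro (⟨rfl, -⟩ | ⟨-, rfl⟩)
          · exact hab.ne rfl
          · exact hya rfl
      · refine ⟨f, ⟨?_, hwf⟩, rfl⟩
        rw [SimpleGraph.edgeSet_deleteEdges]
        exact ⟨hfE, hfe⟩
  have hcd : colorDegree (G.deleteEdges {s(a, b)}) c w = colorDegree G c w := by
    unfold colorDegree; rw [hset]
  rw [hcd]
  exact hmin.1 w

theorem statement2 (V C : Type) [Fintype V] (G : SimpleGraph V) (c : Sym2 V → C)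
    (hmin : EdgeMinimal G c) :
    ∀ α : C,
      (∀ (u : V) (p : (monoSubgraph G c α).Walk u u), ¬ p.IsCycle) ∧
      (∀ (u v : V) (p : (monoSubgraph G c α).Walk u v), p.IsPath → p.length ≤ 2) := by
  intro α
  constructor
  · intro u p hc
    cases p with
    | nil => exact hc.ne_nil rfl
    | cons h1 p1 =>
      rename_i a
      cases p1 with
      | nil => exact (monoSubgraph G c α).irrefl h1
      | cons h2 p2 =>
        rename_i b
        cases p2 with
        | nil =>
          have h3 := hc.three_le_length
          simp [SimpleGraph.Walk.length_cons] at h3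
        | cons h3 p3 =>
          rename_i d
          have hnd := hc.support_nodup
          simp only [SimpleGraph.Walk.support_cons, List.tail_cons, List.nodup_cons] at hnd
          have hub : u ≠ b := by
            intro h
            exact hnd.2.1 (h ▸ p3.end_mem_support)
          have hda : d ≠ a := by
            intro h
            exact hnd.1 (List.mem_cons_of_mem _ (h ▸ p3.start_mem_support))
          exact key_middle_edge G c hmin h2.1 h1.1.symm
            (by rw [Sym2.eq_swap, h1.2, h2.2]) hub h3.1 (by rw [h3.2, h2.2]) hda
  · intro u v p hp
    cases p with
    | nil => simp
    | cons h1 p1 =>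
      rename_i a
      cases p1 with
      | nil => simp
      | cons h2 p2 =>
        rename_i b
        cases p2 with
        | nil => simp
        | cons h3 p3 =>
          rename_i d
          exfalso
          have hnd := hp.support_nodup
          simp only [SimpleGraph.Walk.support_cons, List.nodup_cons] at hnd
          have hub : u ≠ b := by
            intro h
            exact hnd.1 (List.mem_cons_of_mem _ (h ▸ List.mem_cons_self))
          have hda : d ≠ a := by
            intro h
            exact hnd.2.1 (List.mem_cons_of_mem _ (h ▸ p3.start_mem_support))
          exact key_middle_edge G c hmin h2.1 h1.1.symm
            (by rw [Sym2.eq_swap, h1.2, h2.2]) hub h3.1 (by rw [h3.2, h2.2]) hda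
end

section
/- For every integer k ≥ 1 and every even integer n with n ≥ 2k there exists an edge-colored graph (G,c) on n vertices such that δ^c(G) = n/2 + k − 2 and (G,c) is not rainbow k-connected. (Such a graph is obtained by taking two disjoint copies of K_{n/2}, each colored so that all of its edges receive pairwise distinct colors, and adding k−1 pairwise disjoint perfect matchings between the two copies, where each matching receives a unique new color.) -/
open SimpleGraph

section Statement19Aux

/-- Crossing adjacency: `u` in the first half, `v` in the second half, matched by one of `t`
matchings. -/
def crossAdjAux (n m t : ℕ) (u v : Fin n) : Prop :=
  u.val < m ∧ m ≤ v.val ∧ ∃ i, i < t ∧ (u.val + i) % m = v.val - m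

/-- Two cliques of size `m` plus `t` matchings between them. -/
@[reducible] def myGraphAux (n m t : ℕ) : SimpleGraph (Fin n) where
  Adj u v := u ≠ v ∧ ((u.val < m ↔ v.val < m) ∨ crossAdjAux n m t u v ∨ crossAdjAux n m t v u)
  symm := by
    constructor
    rintro u v ⟨h1, h2⟩
    refine ⟨h1.symm, ?_⟩
    rcases h2 with h | h | h
    · exact Or.inl h.symm
    · exact Or.inr (Or.inr h)
    · exact Or.inr (Or.inl h)
  loopless := ⟨fun v h => h.1 rfl⟩

/-- The coloring: clique edges get their own name, matching edges get the matching index. -/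
def myColorAux (n m : ℕ) : Sym2 (Fin n) → Sym2 (Fin n) ⊕ ℕ :=
  Sym2.lift ⟨fun u v =>
    if u.val < m ∧ m ≤ v.val then Sum.inr ((v.val - m + (m - u.val)) % m)
    else if v.val < m ∧ m ≤ u.val then Sum.inr ((u.val - m + (m - v.val)) % m)
    else Sum.inl s(u, v), by
      intro u v
      dsimp only
      by_cases h1 : u.val < m ∧ m ≤ v.val
      · have h2 : ¬ (v.val < m ∧ m ≤ u.val) := by omega
        simp [h1, h2]
      · by_cases h2 : v.val < m ∧ m ≤ u.val
        · simp [h1, h2]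
        · simp [h1, h2, Sym2.eq_swap]⟩

lemma myColorAux_cross {n m : ℕ} (a b : Fin n) (ha : a.val < m) (hb : m ≤ b.val)
    (i : ℕ) (him : i < m) (hi : (a.val + i) % m = b.val - m) :
    myColorAux n m s(a, b) = Sum.inr i := by
  simp only [myColorAux, Sym2.lift_mk]
  rw [if_pos ⟨ha, hb⟩]
  congr 1
  rw [← hi, Nat.mod_add_mod]
  have h : a.val + i + (m - a.val) = m + i := by omega
  rw [h, Nat.add_mod_left, Nat.mod_eq_of_lt him]

lemma myColorAux_same {n m : ℕ} (a b : Fin n) (h : a.val < m ↔ b.val < m) :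
    myColorAux n m s(a, b) = Sum.inl s(a, b) := by
  simp only [myColorAux, Sym2.lift_mk]
  rw [if_neg (by omega), if_neg (by omega)]

lemma myColorAux_cross' {n m : ℕ} (a b : Fin n) (ha : a.val < m) (hb : m ≤ b.val)
    (i : ℕ) (him : i < m) (hi : (a.val + i) % m = b.val - m) :
    myColorAux n m s(b, a) = Sum.inr i := by
  rw [Sym2.eq_swap]; exact myColorAux_cross a b ha hb i him hi

lemma ncard_lt_half {n m : ℕ} (hn2 : n = 2 * m) :
    {w : Fin n | w.val < m}.ncard = m := by
  have himg : (fun (x : Fin m) => (Fin.castLE (by omega) x : Fin n)) '' Set.univ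
      = {w : Fin n | w.val < m} := by
    ext w
    simp only [Set.image_univ, Set.mem_range, Set.mem_setOf_eq]
    constructor
    · rintro ⟨x, rfl⟩; exact x.isLt
    · intro hw; exact ⟨⟨w.val, hw⟩, Fin.ext rfl⟩
  rw [← himg, Set.ncard_image_of_injective _ (Fin.castLE_injective _), Set.ncard_univ,
    Nat.card_eq_fintype_card, Fintype.card_fin]

lemma ncard_ge_half {n m : ℕ} (hn2 : n = 2 * m) :
    {w : Fin n | m ≤ w.val}.ncard = m := by
  have hc : {w : Fin n | m ≤ w.val} = {w : Fin n | w.val < m}ᶜ := by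
    ext w; simp [not_lt]
  have := Set.ncard_add_ncard_compl {w : Fin n | w.val < m}
  rw [ncard_lt_half hn2] at this
  rw [hc]
  have hcard : Nat.card (Fin n) = n := by simp
  omega

lemma colorDeg_eq {n m t : ℕ} (hn2 : n = 2 * m) (hm : 0 < m) (ht : t ≤ m) (u : Fin n) :
    colorDegree (myGraphAux n m t) (myColorAux n m) u = (m - 1) + t := by
  have hmodlt : ∀ x : ℕ, x % m < m := fun x => Nat.mod_lt x hm
  have himg : myColorAux n m '' ((myGraphAux n m t).incidenceSet u) =
      (fun w : Fin n => (Sum.inl s(u, w) : Sym2 (Fin n) ⊕ ℕ)) ''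
        ({w : Fin n | (w.val < m ↔ u.val < m)} \ {u}) ∪
      Sum.inr '' (Set.Iio t) := by
    ext e
    constructor
    · rintro ⟨f, ⟨hf, huf⟩, rfl⟩
      obtain ⟨x, y⟩ := f
      rw [Sym2.mem_iff] at huf
      rw [SimpleGraph.mem_edgeSet] at hf
      have key : ∀ w : Fin n, (myGraphAux n m t).Adj u w →
          myColorAux n m s(u, w) ∈
            (fun w : Fin n => (Sum.inl s(u, w) : Sym2 (Fin n) ⊕ ℕ)) ''
              ({w : Fin n | (w.val < m ↔ u.val < m)} \ {u}) ∪ Sum.inr '' (Set.Iio t) := by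
        intro w hw
        rcases hw.2 with h | h | h
        · left
          refine ⟨w, ⟨?_, fun hwu => hw.1 ((Set.mem_singleton_iff.mp hwu).symm)⟩,
            by rw [myColorAux_same u w (by omega)]⟩
          have : (w.val < m ↔ u.val < m) := by omega
          exact this
        · right
          obtain ⟨h1, h2, i, hit, hi⟩ := h
          rw [myColorAux_cross u w h1 h2 i (by omega) hi]
          exact ⟨i, hit, rfl⟩
        · right
          obtain ⟨h1, h2, i, hit, hi⟩ := h
          rw [myColorAux_cross' w u h1 h2 i (by omega) hi]
          exact ⟨i, hit, rfl⟩
      rcases huf with rfl | rfl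
      · exact key y hf
      · show myColorAux n m s(x, u) ∈ _
        rw [Sym2.eq_swap]
        exact key x hf.symm
    · rintro (⟨w, hw, rfl⟩ | ⟨i, hit, rfl⟩)
      · obtain ⟨hww0, hwu0⟩ := hw
        have hww : w.val < m ↔ u.val < m := hww0
        have hwu : w ≠ u := hwu0
        refine ⟨s(u, w), ⟨?_, Sym2.mem_mk_left u w⟩, myColorAux_same u w (by omega)⟩
        rw [SimpleGraph.mem_edgeSet]
        exact ⟨fun h => hwu h.symm, Or.inl (by omega)⟩
      · simp only [Set.mem_Iio] at hit
        by_cases hu : u.val < m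
        · refine ⟨s(u, ⟨m + (u.val + i) % m, by have := hmodlt (u.val + i); omega⟩),
            ⟨?_, Sym2.mem_mk_left _ _⟩, ?_⟩
          · rw [SimpleGraph.mem_edgeSet]
            refine ⟨?_, Or.inr (Or.inl ⟨hu, by simp, i, hit, by simp⟩)⟩
            intro h
            apply_fun Fin.val at h
            simp only at h
            omega
          · exact myColorAux_cross u _ hu (by simp) i (by omega) (by simp)
        · have hun : u.val < 2 * m := by omega
          refine ⟨s(u, ⟨(u.val - m + (m - i)) % m, by have := hmodlt (u.val - m + (m - i)); omega⟩),
            ⟨?_, Sym2.mem_mk_left _ _⟩, ?_⟩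
          · rw [SimpleGraph.mem_edgeSet]
            refine ⟨?_, Or.inr (Or.inr ⟨hmodlt _, by omega, i, hit, ?_⟩)⟩
            · intro h
              apply_fun Fin.val at h
              simp only at h
              have := hmodlt (u.val - m + (m - i))
              omega
            · show ((u.val - m + (m - i)) % m + i) % m = u.val - m
              rw [Nat.mod_add_mod]
              have h2 : u.val - m + (m - i) + i = u.val - m + m := by omega
              rw [h2, Nat.add_mod_right, Nat.mod_eq_of_lt (by omega)]
          · refine myColorAux_cross' _ u (hmodlt _) (by omega) i (by omega) ?_
            show ((u.val - m + (m - i)) % m + i) % m = u.val - m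
            rw [Nat.mod_add_mod]
            have h2 : u.val - m + (m - i) + i = u.val - m + m := by omega
            rw [h2, Nat.add_mod_right, Nat.mod_eq_of_lt (by omega)]
  rw [colorDegree, himg]
  have hdisj : Disjoint ((fun w : Fin n => (Sum.inl s(u, w) : Sym2 (Fin n) ⊕ ℕ)) ''
      ({w : Fin n | (w.val < m ↔ u.val < m)} \ {u})) (Sum.inr '' (Set.Iio t)) := by
    rw [Set.disjoint_left]
    rintro e ⟨w, -, rfl⟩ ⟨i, -, h⟩
    simp at h
  rw [Set.ncard_union_eq hdisj (Set.Finite.image _ (Set.toFinite _))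
    (Set.Finite.image _ (Set.finite_Iio t))]
  have h1 : ((fun w : Fin n => (Sum.inl s(u, w) : Sym2 (Fin n) ⊕ ℕ)) ''
      ({w : Fin n | (w.val < m ↔ u.val < m)} \ {u})).ncard
      = ({w : Fin n | (w.val < m ↔ u.val < m)} \ {u}).ncard := by
    apply Set.ncard_image_of_injective
    intro a b h
    exact Sym2.congr_right.mp (Sum.inl_injective h)
  have h2 : (Sum.inr '' (Set.Iio t) : Set (Sym2 (Fin n) ⊕ ℕ)).ncard = t := by
    rw [Set.ncard_image_of_injective _ Sum.inr_injective, ← Finset.coe_Iio,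
      Set.ncard_coe_finset, Nat.card_Iio]
  rw [h1, h2]
  have hu : u ∈ {w : Fin n | (w.val < m ↔ u.val < m)} := by
    simp only [Set.mem_setOf_eq]
  rw [Set.ncard_diff_singleton_of_mem hu]
  have hB : {w : Fin n | (w.val < m ↔ u.val < m)}.ncard = m := by
    by_cases hum : u.val < m
    · have he : {w : Fin n | (w.val < m ↔ u.val < m)} = {w : Fin n | w.val < m} := by
        ext w; simp [hum]
      rw [he, ncard_lt_half hn2]
    · have he : {w : Fin n | (w.val < m ↔ u.val < m)} = {w : Fin n | m ≤ w.val} := by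
        ext w
        simp only [Set.mem_setOf_eq]
        omega
      rw [he, ncard_ge_half hn2]
  rw [hB]

end Statement19Aux

section Statement19Aux2

lemma notRainbowAux {n m t k : ℕ} (hn2 : n = 2 * m) (hm : 0 < m) (hk : 1 ≤ k)
    (ht : t = k - 1) (htm : t < m) :
    ¬ RainbowKConnected (myGraphAux n m t) (myColorAux n m) k := by
  intro hR
  have hmn : m + t < n := by omega
  set u0 : Fin n := ⟨0, by omega⟩ with hu0
  set v0 : Fin n := ⟨m + t, hmn⟩ with hv0
  have hne : u0 ≠ v0 := by
    intro h
    apply_fun Fin.val at h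
    simp only [hu0, hv0] at h
    omega
  obtain ⟨p, hpath, -, hdisj, hinj⟩ := hR u0 v0 hne
  set S : Set (Fin n) := {w | w.val < m} with hS
  have hu0S : u0 ∈ S := by simp [hS, hu0, hm]
  have hv0S : v0 ∉ S := by simp [hS, hv0]
  have hnadj : ¬ (myGraphAux n m t).Adj u0 v0 := by
    rintro ⟨-, h | h | h⟩
    · simp only [hu0, hv0] at h; omega
    · obtain ⟨-, -, i, hit, hi⟩ := h
      simp only [hu0, hv0, Nat.zero_add, Nat.add_sub_cancel_left] at hi
      rw [Nat.mod_eq_of_lt (by omega)] at hi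
      omega
    · obtain ⟨h1, -⟩ := h
      simp only [hv0] at h1
      omega
  choose d hdmem hdfst hdsnd using fun i : Fin k => ((p i).exists_boundary_dart S hu0S hv0S)
  have hedge : ∀ i, (d i).edge ∈ (p i).edges := fun i =>
    List.mem_map_of_mem (f := SimpleGraph.Dart.edge) (hdmem i)
  have hedgeinj : Function.Injective fun i => (d i).edge := by
    intro i j hij
    have hije : (d i).edge = (d j).edge := hij
    by_contra hne'
    have hij' : (d i).edge ∈ (p j).edges := hije ▸ hedge j
    have hij'' : s((d i).fst, (d i).snd) ∈ (p j).edges := hij'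
    have hfi : (d i).fst ∈ (p j).support := (p j).fst_mem_support_of_mem_edges hij''
    have hsi : (d i).snd ∈ (p j).support := (p j).snd_mem_support_of_mem_edges hij''
    have hei : s((d i).fst, (d i).snd) ∈ (p i).edges := hedge i
    have hfi' : (d i).fst ∈ (p i).support := (p i).fst_mem_support_of_mem_edges hei
    have hsi' : (d i).snd ∈ (p i).support := (p i).snd_mem_support_of_mem_edges hei
    have h1 := hdisj i j hne' _ hfi' hfi
    have h2 := hdisj i j hne' _ hsi' hsi
    have hfst : (d i).fst = u0 := by
      rcases h1 with h | h
      · exact h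
      · exact absurd (h ▸ hdfst i) hv0S
    have hsnd : (d i).snd = v0 := by
      rcases h2 with h | h
      · exact absurd hu0S (h ▸ hdsnd i)
      · exact h
    exact hnadj (hfst ▸ hsnd ▸ (d i).adj)
  -- each boundary dart's edge has a matching color
  have hcol : ∀ i : Fin k, ∃ j, j < t ∧ myColorAux n m (d i).edge = Sum.inr j := by
    intro i
    have hadj := (d i).adj
    have hfst : (d i).fst.val < m := hdfst i
    have hsnd : ¬ (d i).snd.val < m := hdsnd i
    rcases hadj.2 with h | h | h
    · omega
    · obtain ⟨h1, h2, j, hjt, hj⟩ := h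
      exact ⟨j, hjt, myColorAux_cross _ _ h1 h2 j (by omega) hj⟩
    · obtain ⟨h1, -⟩ := h
      omega
  choose j hjt hjc using hcol
  have hjinj : Function.Injective fun i => j i := by
    intro a b hab
    have hab' : j a = j b := hab
    apply hedgeinj
    apply hinj ⟨a, hedge a⟩ ⟨b, hedge b⟩
    rw [hjc a, hjc b, hab']
  have : k ≤ t := by
    have := Fintype.card_le_of_injective
      (fun i : Fin k => (⟨j i, hjt i⟩ : Fin t)) (by
        intro a b hab
        apply hjinj
        simpa [Fin.ext_iff] using hab)
    simpa using this
  omega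

end Statement19Aux2

theorem statement19 (k : ℕ) (hk : 1 ≤ k) (n : ℕ) (hn : Even n) (hnk : 2 * k ≤ n) :
    ∃ (C : Type) (G : SimpleGraph (Fin n)) (c : Sym2 (Fin n) → C),
      (∀ v : Fin n, n / 2 + k - 2 ≤ colorDegree G c v) ∧
      (∃ v : Fin n, colorDegree G c v = n / 2 + k - 2) ∧
      ¬ RainbowKConnected G c k := by
  obtain ⟨m, hm2⟩ := hn
  have hn2 : n = 2 * m := by omega
  have hm : 0 < m := by omega
  have hkm : k ≤ m := by omega
  have hhalf : n / 2 = m := by omega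
  set t := k - 1 with hts
  have hdeg : ∀ v : Fin n, colorDegree (myGraphAux n m t) (myColorAux n m) v = n / 2 + k - 2 := by
    intro v
    rw [colorDeg_eq hn2 hm (by omega) v]
    omega
  refine ⟨Sym2 (Fin n) ⊕ ℕ, myGraphAux n m t, myColorAux n m, fun v => (hdeg v).ge,
    ⟨⟨0, by omega⟩, hdeg _⟩, notRainbowAux hn2 hm hk rfl (by omega)⟩
end
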